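/- arXiv:1203.2046 — 2 statements merged into one kernel-verified Lean document; each statement's English description precedes it below -/
import Mathlib

section
/- Let R = ℂ[x,y,z] and let f₁, f₂, f₃ ∈ R be homogeneous polynomials with a syzygy A·f₁ + B·f₂ + C·f₃ = 0 where A, B, C form an R-regular sequence. Then there exist D, E, F ∈ R such that f₁ = B·D + C·E, f₂ = C·F - A·D, and f₃ = -B·F - A·E; i.e., f₁, -f₂, f₃ are the 2×2 minors of the 3×2 matrix with columns (A,B,C) and (F,-E,D). -/
open MvPolynomial

lemma key {R : Type*} [CommRing R] (I : Ideal R) (r x : R)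
    (hr : IsSMulRegular (R ⧸ (I • ⊤ : Submodule R R)) r) (h : r * x ∈ I) : x ∈ I := by
  have hI : (I • ⊤ : Submodule R R) = I := by simp [smul_eq_mul, Ideal.mul_top]
  have : r • (Submodule.Quotient.mk x : R ⧸ (I • ⊤ : Submodule R R)) = r • 0 := by
    rw [smul_zero, ← Submodule.Quotient.mk_smul, Submodule.Quotient.mk_eq_zero, hI,
      smul_eq_mul]; exact h
  have := hr this
  rwa [Submodule.Quotient.mk_eq_zero, hI] at this

theorem stmt_0 (f₁ f₂ f₃ A B C : MvPolynomial (Fin 3) ℂ) (d₁ d₂ d₃ : ℕ)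
    (hf₁ : f₁.IsHomogeneous d₁) (hf₂ : f₂.IsHomogeneous d₂) (hf₃ : f₃.IsHomogeneous d₃)
    (hreg : RingTheory.Sequence.IsRegular (MvPolynomial (Fin 3) ℂ) [A, B, C])
    (hsyz : A * f₁ + B * f₂ + C * f₃ = 0) :
    ∃ D E F : MvPolynomial (Fin 3) ℂ,
      f₁ = B * D + C * E ∧ f₂ = C * F - A * D ∧ f₃ = -(B * F) - A * E := by
  have hw := hreg.toIsWeaklyRegular.regular_mod_prev
  have h0 := hw 0 (by norm_num)
  have h1 := hw 1 (by norm_num)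
  have h2 := hw 2 (by norm_num)
  simp only [List.take, List.getElem_cons_zero, List.getElem_cons_succ] at h0 h1 h2
  have hmem3 : f₃ ∈ Ideal.ofList [A, B] := by
    apply key _ _ _ h2
    have hCf : C * f₃ = (-f₁) * A + (-f₂) * B := by linear_combination hsyz
    rw [hCf]
    refine Ideal.add_mem _ (Ideal.mul_mem_left _ _ ?_) (Ideal.mul_mem_left _ _ ?_) <;>
      exact Ideal.subset_span (by simp)
  obtain ⟨E', hE', F', hF', hf3⟩ : ∃ E' ∈ Ideal.span {A}, ∃ F' ∈ Ideal.ofList [B],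
      E' + F' = f₃ := by
    rw [show Ideal.ofList [A, B] = Ideal.span {A} ⊔ Ideal.ofList [B] by simp] at hmem3
    exact Submodule.mem_sup.mp hmem3
  obtain ⟨E, hE⟩ := Ideal.mem_span_singleton'.mp hE'
  rw [Ideal.ofList_singleton] at hF'
  obtain ⟨F, hF⟩ := Ideal.mem_span_singleton'.mp hF'
  have hstep : B * (f₂ + C * F) = (-(f₁ + C * E)) * A := by
    linear_combination hsyz + C * hf3 + C * hE + C * hF
  have hmem2 : f₂ + C * F ∈ Ideal.ofList [A] := by
    apply key _ _ _ h1
    rw [Ideal.ofList_singleton, Ideal.mem_span_singleton]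
    exact ⟨-(f₁ + C * E), by linear_combination hstep⟩
  rw [Ideal.ofList_singleton] at hmem2
  obtain ⟨D, hD⟩ := Ideal.mem_span_singleton'.mp hmem2
  have hA : IsSMulRegular (MvPolynomial (Fin 3) ℂ) A := by
    have hbot : ((Ideal.ofList ([] : List (MvPolynomial (Fin 3) ℂ))) • ⊤ :
        Submodule (MvPolynomial (Fin 3) ℂ) (MvPolynomial (Fin 3) ℂ)) = ⊥ := by simp
    exact ((Submodule.quotEquivOfEqBot _ hbot).isSMulRegular_congr A).mp h0
  have hkill : A * (f₁ + C * E + B * D) = A * 0 := by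
    linear_combination hstep + B * hD
  have hf1 : f₁ + C * E + B * D = 0 := hA hkill
  exact ⟨-D, -E, -F, by linear_combination hf1, by linear_combination -hD,
    by linear_combination -hf3 - hE - hF⟩
end

section
/- Let R = ℂ[x,y,z]. If f₁, f₂, f₃ ∈ R admit a syzygy A·f₁ + B·f₂ + C·f₃ = 0 with A, B, C an R-regular sequence, then the ideal I = ⟨f₁, f₂, f₃⟩ is equal to the ideal generated by the 2×2 minors of a 3×2 matrix over R. -/
/-!
A syzygy `(f₁, f₂, f₃)` of a regular sequence `a, b, c` is a Koszul syzygy (the Koszul complex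
is exact in degree one): cancelling `c` modulo `(a, b)`, then `b` modulo `(a)`, then `a` in `R`
writes `(f₁, f₂, f₃) = (-(b w + c u), a w - c v, a u + b v)`. Up to sign, these are the `2 × 2`
minors of the matrix with columns `(a, b, c)` and `(-v, u, -w)`.
-/

open MvPolynomial

namespace RingTheory.Sequence

variable {R : Type*} [CommRing R]

theorem IsWeaklyRegular.mem_ofList_take_of_mul_mem {rs : List R} (h : IsWeaklyRegular R rs)
    {i : ℕ} (hi : i < rs.length) {x : R} (hx : rs[i] * x ∈ Ideal.ofList (rs.take i)) :
    x ∈ Ideal.ofList (rs.take i) := by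
  have hreg := h.regular_mod_prev i hi
  rw [Ideal.smul_eq_mul, Ideal.mul_top] at hreg
  exact mem_of_isSMulRegular_quotient_of_smul_mem hreg hx

theorem IsWeaklyRegular.exists_koszul_of_syzygy {a b c f₁ f₂ f₃ : R}
    (hreg : IsWeaklyRegular R [a, b, c]) (hsyz : a * f₁ + b * f₂ + c * f₃ = 0) :
    ∃ u v w : R, f₁ = -(b * w + c * u) ∧ f₂ = a * w - c * v ∧ f₃ = a * u + b * v := by
  have hf₃ : f₃ ∈ Ideal.span {a, b} := by
    have hcancel := hreg.mem_ofList_take_of_mul_mem (i := 2) (x := f₃) (by simp)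
    simp only [List.take, Ideal.ofList_cons, Ideal.ofList_nil, sup_bot_eq, ← Ideal.span_insert,
      List.getElem_cons_succ, List.getElem_cons_zero] at hcancel
    exact hcancel (Ideal.mem_span_pair.2 ⟨-f₁, -f₂, by linear_combination -hsyz⟩)
  obtain ⟨u, v, huv⟩ := Ideal.mem_span_pair.1 hf₃
  have hf₂ : f₂ + c * v ∈ Ideal.span {a} := by
    have hcancel := hreg.mem_ofList_take_of_mul_mem (i := 1) (x := f₂ + c * v) (by simp)
    simp only [List.take, Ideal.ofList_cons, Ideal.ofList_nil, sup_bot_eq,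
      List.getElem_cons_succ, List.getElem_cons_zero] at hcancel
    exact hcancel (Ideal.mem_span_singleton.2 ⟨-(f₁ + c * u), by linear_combination hsyz + c * huv⟩)
  obtain ⟨w, hw⟩ := Ideal.mem_span_singleton.1 hf₂
  have hf₁ : f₁ + b * w + c * u = 0 := by
    have hcancel := hreg.mem_ofList_take_of_mul_mem (i := 0) (x := f₁ + b * w + c * u) (by simp)
    simp only [List.take, Ideal.ofList_nil, Ideal.mem_bot, List.getElem_cons_zero] at hcancel
    exact hcancel (by linear_combination hsyz + c * huv - b * hw)
  exact ⟨u, v, w, by linear_combination hf₁, by linear_combination hw, by linear_combination -huv⟩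

end RingTheory.Sequence

theorem Ideal.span_range_det_submatrix_succAbove_fin_three {R : Type*} [CommRing R]
    (a b c u v w : R) :
    Ideal.span (Set.range fun i : Fin 3 => (!![a, -v; b, u; c, -w].submatrix i.succAbove id).det) =
      Ideal.span {-(b * w + c * u), a * w - c * v, a * u + b * v} := by
  have hminors : (fun i : Fin 3 => (!![a, -v; b, u; c, -w].submatrix i.succAbove id).det) =
      ![-(b * w + c * u), -(a * w - c * v), a * u + b * v] := by
    ext i
    fin_cases i <;>
      simp only [Fin.isValue, Matrix.det_fin_two, Matrix.submatrix_apply, Fin.succAbove, id_eq,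
        Matrix.of_apply, Matrix.cons_val, Fin.reduceFinMk, Fin.reduceCastSucc, Fin.reduceLT,
        Fin.reduceSucc, ↓reduceIte] <;>
      ring
  rw [hminors, Matrix.range_cons, Matrix.range_cons, Matrix.range_cons, Matrix.range_empty]
  simp only [Set.union_empty, Set.singleton_union, Ideal.span_insert, Ideal.span_singleton_neg]

theorem stmt_1 (f₁ f₂ f₃ A B C : MvPolynomial (Fin 3) ℂ)
    (hreg : RingTheory.Sequence.IsRegular (MvPolynomial (Fin 3) ℂ) [A, B, C])
    (hsyz : A * f₁ + B * f₂ + C * f₃ = 0) :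
    ∃ M : Matrix (Fin 3) (Fin 2) (MvPolynomial (Fin 3) ℂ),
      Ideal.span {f₁, f₂, f₃} =
        Ideal.span (Set.range fun i : Fin 3 => (M.submatrix i.succAbove id).det) := by
  obtain ⟨u, v, w, rfl, rfl, rfl⟩ := hreg.toIsWeaklyRegular.exists_koszul_of_syzygy hsyz
  exact ⟨!![A, -v; B, u; C, -w], (Ideal.span_range_det_submatrix_succAbove_fin_three ..).symm⟩
end
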